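/- For every j ∈ ℕ, j ≥ 1: if there exists k ∈ ℕ, k ≥ 1, with 2^{2^k} − k ≤ j ≤ 2^{2^k} + 2k, then b(j) ≤ log₂ j; otherwise b(j) ≤ 2. -/

import Mathlib

/-!
Since `∑_{i ≤ j} 2^i < 2^{j+1}`, `b(j)` is at most any nonnegative bound of `a` on `[1, j]`;
for `j ≥ 2` every `a(i)` with `i ≤ j` is at most `max 1 (log₂ i) ≤ log₂ j`.

Otherwise write `a = 1 + (a - 1)`. A point `i` of the `k`-th block has `log₂ i ≤ 2^k + 1`, so its
excess `2^i (a(i) - 1)` is at most `2^{i+k}`. The blocks are so far apart that the exponents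
`i + k` are pairwise distinct, and if `j` lies beyond `2^{2^k} + 2k` for every block meeting
`[1, j]` they are all below `j`. The excess sum is then below `2^j`, and `b(j) < 3/2`.
-/
noncomputable section
open Real

-- The sequence `a : ℤ → ℝ` from (2.2): a(j) = log₂ j if j = i + 2^{2^k} for some
-- k ∈ ℕ, k ≥ 1, and i ∈ ℤ with -k ≤ i ≤ k; a(j) = 1 otherwise.
open Classical in
def aSeq (j : ℤ) : ℝ :=
  if ∃ k : ℕ, 1 ≤ k ∧ ∃ i : ℤ, -(k:ℤ) ≤ i ∧ i ≤ (k:ℤ) ∧ j = i + 2^(2^k)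
  then Real.logb 2 (j : ℝ) else 1

/-- `b(j) = 2^{-j-1} ∑_{i=1}^j 2^i a(i)` from (3.1). -/
def bSeq (j : ℕ) : ℝ := (2:ℝ)^(-(j:ℤ)-1) * ∑ i ∈ Finset.Icc 1 j, (2:ℝ)^(i:ℕ) * aSeq (i:ℤ)

/-- `j₀(m) = ⌈log₂ m⌉ + 1`. -/
def j0 (m : ℕ) : ℕ := ⌈Real.logb 2 (m:ℝ)⌉₊ + 1

/-- The paper's `k`-th block `{t + 2^{2^k} : |t| ≤ k}`, restated in `ℕ`. -/
def InBlock (k i : ℕ) : Prop := 1 ≤ k ∧ 2 ^ 2 ^ k ≤ i + k ∧ i ≤ 2 ^ 2 ^ k + k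

open Classical in
def blockIndex (i : ℕ) : ℕ := if h : ∃ k, InBlock k i then h.choose else 0

lemma inBlock_blockIndex {i : ℕ} (h : ∃ k, InBlock k i) : InBlock (blockIndex i) i := by
  rw [blockIndex, dif_pos h]
  exact h.choose_spec

open Classical in
def blockPoints (j : ℕ) : Finset ℕ := (Finset.Icc 1 j).filter fun i => ∃ k, InBlock k i

open Classical in
lemma mem_blockPoints {i j : ℕ} : i ∈ blockPoints j ↔ i ∈ Finset.Icc 1 j ∧ ∃ k, InBlock k i :=
  Finset.mem_filter

lemma two_mul_add_two_le_two_pow_two_pow (k : ℕ) : 2 * k + 2 ≤ 2 ^ 2 ^ k := by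
  have h₁ : 2 ^ (k + 1) ≤ 2 ^ 2 ^ k := Nat.pow_le_pow_right two_pos k.lt_two_pow_self
  have h₂ : 2 * (k + 1) ≤ 2 ^ (k + 1) := by
    rw [pow_succ]
    have := k.lt_two_pow_self
    omega
  omega

lemma two_pow_two_pow_add_two_mul_lt {k₁ k₂ : ℕ} (hk : k₁ < k₂) :
    2 ^ 2 ^ k₁ + 2 * k₁ < 2 ^ 2 ^ k₂ := by
  have hN := two_mul_add_two_le_two_pow_two_pow k₁
  have hsq : 2 ^ 2 ^ (k₁ + 1) = 2 ^ 2 ^ k₁ * 2 ^ 2 ^ k₁ := by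
    rw [pow_succ, pow_mul, sq]
  have hmono : 2 ^ 2 ^ (k₁ + 1) ≤ 2 ^ 2 ^ k₂ :=
    Nat.pow_le_pow_right two_pos (Nat.pow_le_pow_right two_pos hk)
  nlinarith

lemma InBlock.add_lt_add {k₁ k₂ i₁ i₂ : ℕ} (h₁ : InBlock k₁ i₁) (h₂ : InBlock k₂ i₂)
    (hk : k₁ < k₂) : i₁ + k₁ < i₂ + k₂ := by
  have := two_pow_two_pow_add_two_mul_lt hk
  have := h₁.2.2
  have := h₂.2.1
  omega

lemma injOn_add_blockIndex : Set.InjOn (fun i => i + blockIndex i) {i | ∃ k, InBlock k i} := by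
  intro i₁ h₁ i₂ h₂ heq
  have hb₁ := inBlock_blockIndex h₁
  have hb₂ := inBlock_blockIndex h₂
  rcases lt_trichotomy (blockIndex i₁) (blockIndex i₂) with hlt | hindex | hgt
  · exact absurd heq (hb₁.add_lt_add hb₂ hlt).ne
  · simp only [hindex] at heq
    omega
  · exact absurd heq (hb₂.add_lt_add hb₁ hgt).ne'

lemma InBlock.logb_le {k i : ℕ} (h : InBlock k i) : logb 2 (i : ℝ) ≤ 2 ^ k + 1 := by
  obtain ⟨-, hlo, hhi⟩ := h
  have := two_mul_add_two_le_two_pow_two_pow k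
  have hle : i ≤ 2 ^ (2 ^ k + 1) := by
    rw [pow_succ]
    omega
  rw [logb_le_iff_le_rpow one_lt_two (by norm_cast; omega)]
  exact_mod_cast hle

open Classical in
lemma aSeq_natCast (i : ℕ) : aSeq i = if ∃ k, InBlock k i then logb 2 (i : ℝ) else 1 := by
  have hiff : (∃ k : ℕ, 1 ≤ k ∧ ∃ t : ℤ, -(k : ℤ) ≤ t ∧ t ≤ k ∧ (i : ℤ) = t + 2 ^ 2 ^ k) ↔
      ∃ k, InBlock k i := by
    refine exists_congr fun k => and_congr_right fun _ => ?_
    have hcast : ((2 ^ 2 ^ k : ℕ) : ℤ) = 2 ^ 2 ^ k := by push_cast; rfl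
    constructor
    · rintro ⟨t, ht₁, ht₂, hi⟩
      omega
    · rintro ⟨hlo, hhi⟩
      exact ⟨i - 2 ^ 2 ^ k, by omega, by omega, by ring⟩
  simp only [aSeq, hiff, Int.cast_natCast]

lemma aSeq_le_max (i : ℤ) : aSeq i ≤ max 1 (logb 2 (i : ℝ)) := by
  unfold aSeq
  split_ifs
  exacts [le_max_right _ _, le_max_left _ _]

lemma sum_two_pow_lt {s : Finset ℕ} {n : ℕ} (hs : ∀ k ∈ s, k < n) :
    ∑ k ∈ s, (2 : ℝ) ^ k < 2 ^ n := by
  exact_mod_cast Nat.geomSum_lt le_rfl hs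

lemma sum_Icc_two_pow_lt (j : ℕ) : ∑ i ∈ Finset.Icc 1 j, (2 : ℝ) ^ i < 2 ^ (j + 1) :=
  sum_two_pow_lt fun _ hi => Nat.lt_succ_of_le (Finset.mem_Icc.1 hi).2

lemma bSeq_le_of_sum_le {j : ℕ} {C : ℝ}
    (h : ∑ i ∈ Finset.Icc 1 j, (2 : ℝ) ^ i * aSeq i ≤ C * 2 ^ (j + 1)) : bSeq j ≤ C := by
  rw [bSeq, show -(j : ℤ) - 1 = -((j + 1 : ℕ) : ℤ) by push_cast; ring, zpow_neg, zpow_natCast,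
    ← div_eq_inv_mul, div_le_iff₀ (by positivity)]
  exact h

lemma bSeq_le_of_forall_aSeq_le {j : ℕ} {M : ℝ} (hM : 0 ≤ M)
    (h : ∀ i ∈ Finset.Icc 1 j, aSeq i ≤ M) : bSeq j ≤ M := by
  apply bSeq_le_of_sum_le
  calc ∑ i ∈ Finset.Icc 1 j, (2 : ℝ) ^ i * aSeq i
      ≤ ∑ i ∈ Finset.Icc 1 j, (2 : ℝ) ^ i * M :=
        Finset.sum_le_sum fun i hi => mul_le_mul_of_nonneg_left (h i hi) (by positivity)
    _ = M * ∑ i ∈ Finset.Icc 1 j, (2 : ℝ) ^ i := by rw [Finset.mul_sum]; simp only [mul_comm]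
    _ ≤ M * 2 ^ (j + 1) := by gcongr; exact (sum_Icc_two_pow_lt j).le

theorem bSeq_le_logb {j : ℕ} (hj : 2 ≤ j) : bSeq j ≤ logb 2 (j : ℝ) := by
  have hlog : 1 ≤ logb 2 (j : ℝ) := by
    rw [le_logb_iff_rpow_le one_lt_two (by positivity), rpow_one]
    exact_mod_cast hj
  refine bSeq_le_of_forall_aSeq_le (by linarith) fun i hi => (aSeq_le_max i).trans ?_
  obtain ⟨hi₁, hij⟩ := Finset.mem_Icc.1 hi
  refine max_le hlog (logb_le_logb_of_le one_lt_two (by exact_mod_cast hi₁) ?_)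
  exact_mod_cast hij

lemma sum_two_pow_mul_aSeq_le (j : ℕ) :
    ∑ i ∈ Finset.Icc 1 j, (2 : ℝ) ^ i * aSeq i ≤ ∑ i ∈ Finset.Icc 1 j, (2 : ℝ) ^ i +
      ∑ i ∈ blockPoints j, (2 : ℝ) ^ (i + blockIndex i) := by
  classical
  rw [blockPoints, Finset.sum_filter, ← Finset.sum_add_distrib]
  refine Finset.sum_le_sum fun i _ => ?_
  rw [aSeq_natCast]
  split_ifs with h
  · have := (inBlock_blockIndex h).logb_le
    rw [pow_add]
    nlinarith [pow_pos (two_pos : (0 : ℝ) < 2) i]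
  · simp

theorem bSeq_le_two {j : ℕ} (hj : ∀ k, 1 ≤ k → 2 ^ 2 ^ k ≤ j + k → 2 ^ 2 ^ k + 2 * k < j) :
    bSeq j ≤ 2 := by
  have hlt : ∀ n ∈ (blockPoints j).image (fun i => i + blockIndex i), n < j := by
    simp only [Finset.mem_image]
    rintro _ ⟨i, hi, rfl⟩
    obtain ⟨hi, hblock⟩ := mem_blockPoints.1 hi
    obtain ⟨hk, hlo, hhi⟩ := inBlock_blockIndex hblock
    have := hj _ hk (by have := (Finset.mem_Icc.1 hi).2; omega)
    omega
  have hexcess : ∑ i ∈ blockPoints j, (2 : ℝ) ^ (i + blockIndex i) < 2 ^ j := by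
    rw [← Finset.sum_image (injOn_add_blockIndex.mono fun i hi => (mem_blockPoints.1 hi).2)]
    exact sum_two_pow_lt hlt
  apply bSeq_le_of_sum_le
  have := sum_Icc_two_pow_lt j
  rw [pow_succ] at this ⊢
  linarith [sum_two_pow_mul_aSeq_le j, pow_pos (two_pos : (0 : ℝ) < 2) j]

theorem stmt7_general (j : ℕ) :
    ((∃ k : ℕ, 1 ≤ k ∧ (2:ℤ)^(2^k) - (k:ℤ) ≤ (j:ℤ) ∧ (j:ℤ) ≤ 2^(2^k) + 2*(k:ℤ)) →
      bSeq j ≤ Real.logb 2 (j:ℝ)) ∧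
    (¬ (∃ k : ℕ, 1 ≤ k ∧ (2:ℤ)^(2^k) - (k:ℤ) ≤ (j:ℤ) ∧ (j:ℤ) ≤ 2^(2^k) + 2*(k:ℤ)) →
      bSeq j ≤ 2) := by
  have hcast (k : ℕ) : ((2 ^ 2 ^ k : ℕ) : ℤ) = 2 ^ 2 ^ k := by push_cast; rfl
  refine ⟨fun ⟨k, _, hlo, _⟩ => bSeq_le_logb ?_, fun hno => bSeq_le_two fun k hk hlo => ?_⟩
  · have := two_mul_add_two_le_two_pow_two_pow k
    have := hcast k
    omega
  · by_contra hhi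
    exact hno ⟨k, hk, by have := hcast k; omega, by have := hcast k; omega⟩

/-- For every `j ∈ ℕ`, `j ≥ 1`: if there exists `k ∈ ℕ`, `k ≥ 1`, with
`2^{2^k} − k ≤ j ≤ 2^{2^k} + 2k`, then `b(j) ≤ log₂ j`; otherwise `b(j) ≤ 2`. -/
theorem stmt7 (j : ℕ) (hj : 1 ≤ j) :
    ((∃ k : ℕ, 1 ≤ k ∧ (2:ℤ)^(2^k) - (k:ℤ) ≤ (j:ℤ) ∧ (j:ℤ) ≤ 2^(2^k) + 2*(k:ℤ)) →
      bSeq j ≤ Real.logb 2 (j:ℝ)) ∧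
    (¬ (∃ k : ℕ, 1 ≤ k ∧ (2:ℤ)^(2^k) - (k:ℤ) ≤ (j:ℤ) ∧ (j:ℤ) ≤ 2^(2^k) + 2*(k:ℤ)) →
      bSeq j ≤ 2) :=
  stmt7_general j
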